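/- arXiv:1609.06432 — 2 statements merged into one kernel-verified Lean document; each statement's English description precedes it below -/
import Mathlib

section
/- Let A and B be finite alphabets, P_A a probability distribution on A, and W a stochastic kernel assigning to each a ∈ A a probability distribution W(·|a) on B; define the joint distribution P_{AB}(a, b) = P_A(a)·W(b|a) on A × B. For each n, let μ_n be a probability distribution on A^n, and define the joint distribution ν_n on A^n × B^n by ν_n(a^{1:n}, b^{1:n}) = μ_n(a^{1:n}) · Π_{i=1}^n W(b^i | a^i) (i.e., B^{1:n} is generated from A^{1:n} by applying the kernel i.i.d. coordinatewise). Fix ε > 0 and suppose lim_{n→∞} μ_n{ a^{1:n} : 𝕍(T_{a^{1:n}}, P_A) > ε } = 0. Then for every ε' > ε, lim_{n→∞} ν_n{ (a^{1:n}, b^{1:n}) : 𝕍(T_{a^{1:n} b^{1:n}}, P_{AB}) > ε' } = 0. -/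
open Finset Filter

/-!
Conditionally on `a`, the deviation of the joint type of `(a, b)` from `P_A · W` is at most its
deviation from `T_a · W` plus `𝕍(T_a, P_A)`. The first term is `∑_q |(1/n) ∑_i X_{q,i}|` over
the cells `q` of `A × B`, where, given `a`, the `X_{q,i}` are independent in `i`, centered and
bounded by `1`; by Cauchy–Schwarz its second moment is at most `|A × B|² / n`, so Chebyshev's
inequality bounds the conditional probability that it exceeds `ε' - ε` by
`|A × B|² / ((ε' - ε)² n)`, uniformly over the `a` whose type is `ε`-close to `P_A`. The
remaining `a` have vanishing `μ_n`-probability.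
-/

section ProductWeights

/- `∑ b, (∏ i, w i (b i)) * F b` is the expectation of `F` under the product of the
distributions `w i`. -/

variable {ι α : Type*} [Fintype ι] [DecidableEq ι] [Fintype α] {w : ι → α → ℝ}

theorem sum_prod_mul_prod (w g : ι → α → ℝ) :
    ∑ b : ι → α, (∏ i, w i (b i)) * ∏ i, g i (b i) = ∏ i, ∑ x, w i x * g i x := by
  simp_rw [← prod_mul_distrib]
  exact (Fintype.prod_sum fun i x => w i x * g i x).symm

theorem sum_prod_eq_one (hw1 : ∀ i, ∑ x, w i x = 1) : ∑ b : ι → α, ∏ i, w i (b i) = 1 := by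
  rw [← Fintype.prod_sum]
  simp [hw1]

theorem sum_filter_prod_le_one (hw0 : ∀ i x, 0 ≤ w i x) (hw1 : ∀ i, ∑ x, w i x = 1)
    (p : (ι → α) → Prop) [DecidablePred p] :
    ∑ b ∈ univ.filter p, ∏ i, w i (b i) ≤ 1 :=
  (sum_le_sum_of_subset_of_nonneg (filter_subset _ _)
    fun b _ _ => prod_nonneg fun i _ => hw0 i (b i)).trans_eq (sum_prod_eq_one hw1)

theorem sum_prod_mul_apply (hw1 : ∀ i, ∑ x, w i x = 1) (i : ι) (φ : α → ℝ) :
    ∑ b : ι → α, (∏ k, w k (b k)) * φ (b i) = ∑ x, w i x * φ x := by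
  have key := sum_prod_mul_prod w (fun k x => if k = i then φ x else 1)
  rw [Fintype.prod_eq_single i (fun k hk => by simp [hk, hw1])] at key
  simpa using key

theorem sum_prod_mul_apply_mul_apply (hw1 : ∀ i, ∑ x, w i x = 1) {i j : ι} (hij : i ≠ j)
    (φ ψ : α → ℝ) :
    ∑ b : ι → α, (∏ k, w k (b k)) * (φ (b i) * ψ (b j))
      = (∑ x, w i x * φ x) * ∑ x, w j x * ψ x := by
  have key := sum_prod_mul_prod w (fun k x => if k = i then φ x else if k = j then ψ x else 1)
  rw [Fintype.prod_eq_mul i j hij (fun k hk => by simp [hk, hw1])] at key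
  have hprod : ∀ b : ι → α, ∏ k, (if k = i then φ (b k) else if k = j then ψ (b k) else 1)
      = φ (b i) * ψ (b j) := fun b => by
    rw [Fintype.prod_eq_mul i j hij (fun k hk => by simp [hk])]
    simp [hij.symm]
  simpa [hprod, hij.symm] using key

theorem sum_prod_mul_sum_sq (hw1 : ∀ i, ∑ x, w i x = 1) (f : ι → α → ℝ)
    (hmean : ∀ i, ∑ x, w i x * f i x = 0) :
    ∑ b : ι → α, (∏ k, w k (b k)) * (∑ i, f i (b i)) ^ 2 = ∑ i, ∑ x, w i x * f i x ^ 2 := by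
  have cross : ∀ i j, ∑ b : ι → α, (∏ k, w k (b k)) * (f i (b i) * f j (b j))
      = if i = j then ∑ x, w i x * f i x ^ 2 else 0 := by
    intro i j
    split_ifs with hij
    · subst hij
      simp_rw [← sq]
      exact sum_prod_mul_apply hw1 i (fun x => f i x ^ 2)
    · rw [sum_prod_mul_apply_mul_apply hw1 hij, hmean, zero_mul]
  calc _ = ∑ i, ∑ j, ∑ b : ι → α, (∏ k, w k (b k)) * (f i (b i) * f j (b j)) := by
        simp_rw [sq, sum_mul_sum, mul_sum]
        rw [sum_comm]
        exact sum_congr rfl fun i _ => sum_comm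
    _ = _ := by simp_rw [cross, sum_ite_eq, mem_univ, if_true]

end ProductWeights

section WeightedSums

variable {β : Type*} [Fintype β]

theorem sum_filter_lt_le_sum_mul_sq_div {w Y : β → ℝ} (hw : ∀ b, 0 ≤ w b) {t : ℝ} (ht : 0 < t) :
    ∑ b ∈ univ.filter (fun b => t < Y b), w b ≤ (∑ b, w b * Y b ^ 2) / t ^ 2 := by
  rw [le_div_iff₀ (by positivity), sum_mul]
  calc ∑ b ∈ univ.filter (fun b => t < Y b), w b * t ^ 2
      ≤ ∑ b ∈ univ.filter (fun b => t < Y b), w b * Y b ^ 2 :=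
        sum_le_sum fun b hb =>
          mul_le_mul_of_nonneg_left (pow_le_pow_left₀ ht.le (mem_filter.1 hb).2.le 2) (hw b)
    _ ≤ ∑ b, w b * Y b ^ 2 :=
        sum_le_sum_of_subset_of_nonneg (filter_subset _ _) fun b _ _ =>
          mul_nonneg (hw b) (sq_nonneg _)

theorem sum_mul_le_sum_filter_add {μ g : β → ℝ} (p : β → Prop) [DecidablePred p] {c : ℝ}
    (hμ0 : ∀ a, 0 ≤ μ a) (hμ1 : ∑ a, μ a = 1) (hg : ∀ a, g a ≤ 1) (hgc : ∀ a, ¬ p a → g a ≤ c)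
    (hc : 0 ≤ c) :
    ∑ a, μ a * g a ≤ ∑ a ∈ univ.filter p, μ a + c := by
  rw [← sum_filter_add_sum_filter_not univ p]
  gcongr ?_ + ?_
  · exact sum_le_sum fun a _ => mul_le_of_le_one_right (hμ0 a) (hg a)
  · calc ∑ a ∈ univ.filter (fun a => ¬ p a), μ a * g a
        ≤ ∑ a ∈ univ.filter (fun a => ¬ p a), μ a * c :=
          sum_le_sum fun a ha => mul_le_mul_of_nonneg_left (hgc a (mem_filter.1 ha).2) (hμ0 a)
      _ ≤ ∑ a, μ a * c :=
          sum_le_sum_of_subset_of_nonneg (filter_subset _ _) fun a _ _ => mul_nonneg (hμ0 a) hc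
      _ = c := by rw [← sum_mul, hμ1, one_mul]

theorem sum_filter_prod_mul {γ : Type*} [Fintype γ] (μ : β → ℝ) (κ : β → γ → ℝ)
    (p : β → γ → Prop) [∀ a b, Decidable (p a b)] :
    ∑ x ∈ univ.filter (fun x : β × γ => p x.1 x.2), μ x.1 * κ x.1 x.2
      = ∑ a, μ a * ∑ b ∈ univ.filter (p a), κ a b := by
  simp_rw [sum_filter, Fintype.sum_prod_type, mul_sum, mul_ite, mul_zero]

end WeightedSums

section EmpiricalDistributions

variable {A B : Type*}

noncomputable def empiricalDist [DecidableEq A] {n : ℕ} (x : Fin n → A) (u : A) : ℝ :=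
  (1 / (n : ℝ)) * ∑ i, if x i = u then (1 : ℝ) else 0

def varDist [Fintype A] (P Q : A → ℝ) : ℝ :=
  ∑ u, |P u - Q u|

def compProd (P : A → ℝ) (W : A → B → ℝ) (q : A × B) : ℝ :=
  P q.1 * W q.1 q.2

theorem varDist_triangle [Fintype A] (P Q R : A → ℝ) :
    varDist P R ≤ varDist P Q + varDist Q R := by
  unfold varDist
  rw [← sum_add_distrib]
  exact sum_le_sum fun u _ => abs_sub_le _ _ _

variable {W : A → B → ℝ}

theorem varDist_compProd [Fintype A] [Fintype B] (hW0 : ∀ a b, 0 ≤ W a b)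
    (hW1 : ∀ a, ∑ b, W a b = 1) (P Q : A → ℝ) :
    varDist (compProd P W) (compProd Q W) = varDist P Q := by
  unfold varDist compProd
  rw [Fintype.sum_prod_type]
  refine sum_congr rfl fun u _ => ?_
  simp_rw [← sub_mul, abs_mul, abs_of_nonneg (hW0 _ _), ← mul_sum, hW1, mul_one]

variable [DecidableEq A] [DecidableEq B]

/-- The indicator of the cell `q` at `(u, x)`, centered for `x ∼ W(· | u)`. -/
def centeredIndicator (W : A → B → ℝ) (q : A × B) (u : A) (x : B) : ℝ :=
  if u = q.1 then (if x = q.2 then 1 else 0) - W q.1 q.2 else 0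

theorem sum_mul_centeredIndicator [Fintype B] (hW1 : ∀ a, ∑ b, W a b = 1) (q : A × B)
    (u : A) :
    ∑ x, W u x * centeredIndicator W q u x = 0 := by
  unfold centeredIndicator
  split_ifs with hu
  · subst hu
    simp [mul_sub, ← sum_mul, hW1]
  · simp

theorem centeredIndicator_sq_le_one [Fintype B] (hW0 : ∀ a b, 0 ≤ W a b)
    (hW1 : ∀ a, ∑ b, W a b = 1) (q : A × B) (u : A) (x : B) :
    centeredIndicator W q u x ^ 2 ≤ 1 := by
  have hW : W q.1 q.2 ≤ 1 := hW1 q.1 ▸ single_le_sum (fun v _ => hW0 q.1 v) (mem_univ q.2)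
  unfold centeredIndicator
  split_ifs <;> nlinarith [hW0 q.1 q.2]

theorem empiricalDist_zip_sub_compProd {n : ℕ} (a : Fin n → A) (b : Fin n → B) (q : A × B) :
    empiricalDist (fun i => (a i, b i)) q - compProd (empiricalDist a) W q
      = (1 / (n : ℝ)) * ∑ i, centeredIndicator W q (a i) (b i) := by
  unfold empiricalDist compProd centeredIndicator
  rw [mul_assoc, ← mul_sub, sum_mul, ← sum_sub_distrib]
  congr 1
  refine sum_congr rfl fun i _ => ?_
  obtain ⟨u, v⟩ := q
  by_cases ha : a i = u <;> by_cases hb : b i = v <;> simp [ha, hb]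

theorem sum_prod_mul_varDist_sq_le [Fintype A] [Fintype B] (hW0 : ∀ a b, 0 ≤ W a b)
    (hW1 : ∀ a, ∑ b, W a b = 1) {n : ℕ} (a : Fin n → A) :
    ∑ b : Fin n → B, (∏ i, W (a i) (b i))
        * varDist (empiricalDist fun i => (a i, b i)) (compProd (empiricalDist a) W) ^ 2
      ≤ (Fintype.card (A × B) : ℝ) ^ 2 / n := by
  set K : ℝ := (Fintype.card (A × B) : ℝ)
  set Y : A × B → (Fin n → B) → ℝ := fun q b => ∑ i, centeredIndicator W q (a i) (b i)
  have cauchySchwarz : ∀ b : Fin n → B,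
      varDist (empiricalDist fun i => (a i, b i)) (compProd (empiricalDist a) W) ^ 2
        ≤ K * ∑ q, (1 / (n : ℝ)) ^ 2 * Y q b ^ 2 := by
    intro b
    unfold varDist
    simp_rw [empiricalDist_zip_sub_compProd, ← mul_pow, ← sq_abs ((1 / (n : ℝ)) * _)]
    exact sq_sum_le_card_mul_sum_sq
  have variance : ∀ q, ∑ b, (∏ i, W (a i) (b i)) * Y q b ^ 2 ≤ n := by
    intro q
    refine (sum_prod_mul_sum_sq (w := fun i => W (a i)) (fun i => hW1 (a i))
      (fun i => centeredIndicator W q (a i))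
      fun i => sum_mul_centeredIndicator hW1 q (a i)).trans_le ?_
    calc ∑ i, ∑ x, W (a i) x * centeredIndicator W q (a i) x ^ 2
        ≤ ∑ i : Fin n, ∑ x, W (a i) x :=
          sum_le_sum fun i _ => sum_le_sum fun x _ =>
            mul_le_of_le_one_right (hW0 _ _) (centeredIndicator_sq_le_one hW0 hW1 q _ x)
      _ = n := by simp [hW1]
  calc _ ≤ ∑ b, (∏ i, W (a i) (b i)) * (K * ∑ q, (1 / (n : ℝ)) ^ 2 * Y q b ^ 2) :=
        sum_le_sum fun b _ =>
          mul_le_mul_of_nonneg_left (cauchySchwarz b) (prod_nonneg fun i _ => hW0 _ _)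
    _ = K * (1 / (n : ℝ)) ^ 2 * ∑ q, ∑ b, (∏ i, W (a i) (b i)) * Y q b ^ 2 := by
        simp_rw [mul_sum]
        rw [sum_comm]
        exact sum_congr rfl fun q _ => sum_congr rfl fun b _ => by ring
    _ ≤ K * (1 / (n : ℝ)) ^ 2 * ∑ _q : A × B, (n : ℝ) := by
        gcongr with q
        exact variance q
    _ = K ^ 2 / n := by
        rw [sum_const, card_univ, nsmul_eq_mul]
        rcases eq_or_ne (n : ℝ) 0 with hn | hn
        · simp [hn]
        · field_simp
          ring

theorem sum_filter_lt_varDist_le [Fintype A] [Fintype B] (hW0 : ∀ a b, 0 ≤ W a b)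
    (hW1 : ∀ a, ∑ b, W a b = 1) {n : ℕ} (a : Fin n → A) {δ : ℝ} (hδ : 0 < δ) :
    ∑ b ∈ univ.filter (fun b : Fin n → B =>
        δ < varDist (empiricalDist fun i => (a i, b i)) (compProd (empiricalDist a) W)),
      ∏ i, W (a i) (b i)
      ≤ (Fintype.card (A × B) : ℝ) ^ 2 / n / δ ^ 2 :=
  (sum_filter_lt_le_sum_mul_sq_div (fun _ => prod_nonneg fun _ _ => hW0 _ _) hδ).trans
    (div_le_div_of_nonneg_right (sum_prod_mul_varDist_sq_le hW0 hW1 a) (sq_nonneg δ))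

theorem sum_filter_lt_varDist_compProd_le [Fintype A] [Fintype B] (hW0 : ∀ a b, 0 ≤ W a b)
    (hW1 : ∀ a, ∑ b, W a b = 1) {P : A → ℝ} {n : ℕ} (a : Fin n → A) {ε ε' : ℝ}
    (ha : varDist (empiricalDist a) P ≤ ε) (hεε' : ε < ε') :
    ∑ b ∈ univ.filter (fun b : Fin n → B =>
        ε' < varDist (empiricalDist fun i => (a i, b i)) (compProd P W)),
      ∏ i, W (a i) (b i)
      ≤ (Fintype.card (A × B) : ℝ) ^ 2 / n / (ε' - ε) ^ 2 := by
  refine (sum_le_sum_of_subset_of_nonneg ?_ fun _ _ _ => prod_nonneg fun _ _ => hW0 _ _).trans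
    (sum_filter_lt_varDist_le hW0 hW1 a (sub_pos.2 hεε'))
  intro b
  simp only [mem_filter, mem_univ, true_and]
  intro hb
  have triangle := varDist_triangle (empiricalDist fun i => (a i, b i))
    (compProd (empiricalDist a) W) (compProd P W)
  rw [varDist_compProd hW0 hW1] at triangle
  linarith

end EmpiricalDistributions

theorem typicality_through_kernel_general
    {A B : Type*} [Fintype A] [Fintype B] [DecidableEq A] [DecidableEq B]
    (PA : A → ℝ)
    (W : A → B → ℝ) (hW0 : ∀ a b, 0 ≤ W a b) (hW1 : ∀ a, ∑ b, W a b = 1)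
    (PAB : A × B → ℝ) (hPAB : ∀ a b, PAB (a, b) = PA a * W a b)
    (μ : (n : ℕ) → (Fin n → A) → ℝ)
    (hμ0 : ∀ n a, 0 ≤ μ n a) (hμ1 : ∀ n, ∑ a, μ n a = 1)
    (ν : (n : ℕ) → (Fin n → A) × (Fin n → B) → ℝ)
    (hν : ∀ n p, ν n p = μ n p.1 * ∏ i, W (p.1 i) (p.2 i))
    (ε : ℝ)
    (h : Tendsto
      (fun n => ∑ a ∈ Finset.univ.filter
        (fun a : Fin n → A =>
          ε < ∑ u, |(1 / (n : ℝ)) * (∑ i, if a i = u then (1 : ℝ) else 0) - PA u|),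
        μ n a)
      atTop (nhds 0)) :
    ∀ ε' > ε, Tendsto
      (fun n => ∑ p ∈ Finset.univ.filter
        (fun p : (Fin n → A) × (Fin n → B) =>
          ε' < ∑ q : A × B,
            |(1 / (n : ℝ)) * (∑ i, if (p.1 i, p.2 i) = q then (1 : ℝ) else 0) - PAB q|),
        ν n p)
      atTop (nhds 0) := by
  intro ε' hε'
  obtain rfl : PAB = compProd PA W := funext fun q => hPAB q.1 q.2
  change Tendsto (fun n => ∑ a ∈ univ.filter (fun a : Fin n → A =>
    ε < varDist (empiricalDist a) PA), μ n a) atTop (nhds 0) at h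
  change Tendsto (fun n => ∑ p ∈ univ.filter (fun p : (Fin n → A) × (Fin n → B) =>
    ε' < varDist (empiricalDist fun i => (p.1 i, p.2 i)) (compProd PA W)), ν n p) atTop (nhds 0)
  set C : ℝ := (Fintype.card (A × B) : ℝ) ^ 2 / (ε' - ε) ^ 2
  have bound : ∀ n : ℕ, ∑ p ∈ univ.filter (fun p : (Fin n → A) × (Fin n → B) =>
      ε' < varDist (empiricalDist fun i => (p.1 i, p.2 i)) (compProd PA W)), ν n p
      ≤ ∑ a ∈ univ.filter (fun a : Fin n → A => ε < varDist (empiricalDist a) PA), μ n a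
        + C / n := by
    intro n
    simp_rw [hν]
    rw [sum_filter_prod_mul (μ n) (fun (a : Fin n → A) (b : Fin n → B) => ∏ i, W (a i) (b i))
      (fun (a : Fin n → A) (b : Fin n → B) =>
        ε' < varDist (empiricalDist fun i => (a i, b i)) (compProd PA W))]
    refine sum_mul_le_sum_filter_add _ (hμ0 n) (hμ1 n)
      (fun a => sum_filter_prod_le_one (fun i => hW0 (a i)) (fun i => hW1 (a i)) _)
      (fun a ha => ?_) (by positivity)
    rw [div_right_comm]
    exact sum_filter_lt_varDist_compProd_le hW0 hW1 a (not_lt.1 ha) hε'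
  refine tendsto_of_tendsto_of_tendsto_of_le_of_le tendsto_const_nhds ?_
    (fun n => sum_nonneg fun p _ => ?_) bound
  · simpa using h.add (tendsto_const_div_atTop_nhds_zero_nat C)
  · rw [hν]
    exact mul_nonneg (hμ0 n p.1) (prod_nonneg fun i _ => hW0 _ _)

/-- If `B^{1:n}` is generated from `A^{1:n}` by applying a stochastic kernel
`W` i.i.d. coordinatewise, and the probability (under `μ_n`) that the type of `A^{1:n}` is
more than `ε` away from `P_A` vanishes, then for every `ε' > ε` the probability (under the
joint distribution `ν_n`) that the joint type of `(A^{1:n}, B^{1:n})` is more than `ε'` away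
from `P_{AB} = P_A · W` also vanishes. -/
theorem typicality_through_kernel
    {A B : Type*} [Fintype A] [Fintype B] [DecidableEq A] [DecidableEq B]
    (PA : A → ℝ) (hPA0 : ∀ a, 0 ≤ PA a) (hPA1 : ∑ a, PA a = 1)
    (W : A → B → ℝ) (hW0 : ∀ a b, 0 ≤ W a b) (hW1 : ∀ a, ∑ b, W a b = 1)
    (PAB : A × B → ℝ) (hPAB : ∀ a b, PAB (a, b) = PA a * W a b)
    (μ : (n : ℕ) → (Fin n → A) → ℝ)
    (hμ0 : ∀ n a, 0 ≤ μ n a) (hμ1 : ∀ n, ∑ a, μ n a = 1)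
    (ν : (n : ℕ) → (Fin n → A) × (Fin n → B) → ℝ)
    (hν : ∀ n p, ν n p = μ n p.1 * ∏ i, W (p.1 i) (p.2 i))
    (ε : ℝ) (hε : 0 < ε)
    (h : Tendsto
      (fun n => ∑ a ∈ Finset.univ.filter
        (fun a : Fin n → A =>
          ε < ∑ u, |(1 / (n : ℝ)) * (∑ i, if a i = u then (1 : ℝ) else 0) - PA u|),
        μ n a)
      atTop (nhds 0)) :
    ∀ ε' > ε, Tendsto
      (fun n => ∑ p ∈ Finset.univ.filter
        (fun p : (Fin n → A) × (Fin n → B) =>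
          ε' < ∑ q : A × B,
            |(1 / (n : ℝ)) * (∑ i, if (p.1 i, p.2 i) = q then (1 : ℝ) else 0) - PAB q|),
        ν n p)
      atTop (nhds 0) :=
  typicality_through_kernel_general PA W hW0 hW1 PAB hPAB μ hμ0 hμ1 ν hν ε h
end

section
/- Let S be a finite alphabet, n ≥ 1, δ > 0, and let P be a probability distribution on {0,1}^n × S^n with full support, with S-marginal P_S. Let A ⊆ [1,n] and define Q on {0,1}^n × S^n by Q(v^{1:n}, s^{1:n}) = P_S(s^{1:n}) · Π_{j=1}^n q_j(v^j | v^{1:j−1}, s^{1:n}), where q_j is uniform on {0,1} for j ∈ A and equals the conditional distribution P(V^j = · | V^{1:j−1}, S^{1:n}) under P for j ∉ A. If H(V^j | V^{1:j−1}, S^{1:n}) > 1 − δ (conditional Shannon entropy in bits under P) for every j ∈ A, then D(P ‖ Q) ≤ |A|·δ ≤ n·δ, and consequently the variational distance satisfies 𝕍(P, Q) ≤ √(2 log 2) · √(n δ). -/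
open Finset Real Set InformationTheory

/-!
Both `P` and `Q` are `P_S` times a product of successive conditionals, and they differ only in
the factors `j ∈ A`, where `Q` has `1/2`. Hence
`log₂ (P/Q) = ∑_{j ∈ A} (1 + log₂ P(v^j | v^{1:j-1}, s))`, and averaging under `P` gives
`D(P ‖ Q) = ∑_{j ∈ A} (1 - H(V^j | V^{1:j-1}, S^{1:n})) ≤ |A| δ`.
The chain rule for `P` is a telescoping product of prefix marginals, and `Q` is normalised
because the coordinates can be summed out one at a time, the last one first.

Pinsker's inequality follows from the pointwise bound `3 (x - 1)² ≤ (2x + 4) (x log x - x + 1)`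
and Cauchy–Schwarz: `(∑ |P - Q|)² ≤ (∑ (2P + 4Q) / 3) · ∑ Q klFun (P / Q) = 2 D(P ‖ Q)` in nats.
-/

lemma monotoneOn_add_one_mul_log_sub :
    MonotoneOn (fun x => (x + 1) * log x - 2 * (x - 1)) (Ioi 0) := by
  have hderiv : ∀ x : ℝ, 0 < x →
      HasDerivAt (fun x => (x + 1) * log x - 2 * (x - 1)) (log x + 1 + x⁻¹ - 2) x := by
    intro x hx
    refine ((((hasDerivAt_id' x).add_const 1).fun_mul (hasDerivAt_log hx.ne')).fun_sub
      (((hasDerivAt_id' x).sub_const 1).const_mul 2)).congr_deriv ?_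
    field_simp
    ring
  refine monotoneOn_of_hasDerivWithinAt_nonneg (convex_Ioi 0) (f' := fun x => log x + 1 + x⁻¹ - 2)
    (fun x hx => (hderiv x hx).continuousAt.continuousWithinAt) ?_ ?_ <;> rw [interior_Ioi]
  · exact fun x hx => (hderiv x hx).hasDerivWithinAt
  · exact fun x hx => by linarith [one_sub_inv_le_log_of_pos (Set.mem_Ioi.1 hx)]

lemma three_mul_sq_sub_one_le_mul_klFun {x : ℝ} (hx : 0 ≤ x) :
    3 * (x - 1) ^ 2 ≤ (2 * x + 4) * klFun x := by
  set f : ℝ → ℝ := fun x => (2 * x + 4) * klFun x - 3 * (x - 1) ^ 2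
  have hcont : Continuous f := by fun_prop
  set f' : ℝ → ℝ := fun x => 4 * ((x + 1) * log x - 2 * (x - 1))
  have hderiv : ∀ y, 0 < y → HasDerivAt f (f' y) y := by
    intro y hy
    refine ((((hasDerivAt_id' y).const_mul 2).add_const 4).fun_mul
      (hasDerivAt_klFun hy.ne')).fun_sub
      (((hasDerivAt_id' y).sub_const 1).pow 2 |>.const_mul 3) |>.congr_deriv ?_
    rw [klFun_apply]; push_cast; ring
  suffices 0 ≤ f x by simp only [f] at this; linarith
  have hf1 : f 1 = 0 := by simp [f, klFun_one]
  -- `f'` has the sign of `x - 1`, so `f` is smallest at `1`.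
  have hmono := monotoneOn_add_one_mul_log_sub
  rcases le_total x 1 with hx1 | hx1
  · have : AntitoneOn f (Icc 0 1) := by
      refine antitoneOn_of_hasDerivWithinAt_nonpos (convex_Icc 0 1) hcont.continuousOn (f' := f')
        (fun y hy => ?_) (fun y hy => ?_) <;> rw [interior_Icc] at hy
      · exact (hderiv y hy.1).hasDerivWithinAt
      · have := hmono hy.1 (Set.mem_Ioi.2 one_pos) hy.2.le
        norm_num at this
        linarith
    simpa [hf1] using this ⟨hx, hx1⟩ ⟨zero_le_one, le_rfl⟩ hx1
  · have : MonotoneOn f (Ici 1) := by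
      refine monotoneOn_of_hasDerivWithinAt_nonneg (convex_Ici 1) hcont.continuousOn (f' := f')
        (fun y hy => ?_) (fun y hy => ?_) <;> rw [interior_Ici] at hy
      · exact (hderiv y (zero_lt_one.trans hy)).hasDerivWithinAt
      · have := hmono (Set.mem_Ioi.2 one_pos) (Set.mem_Ioi.2 (zero_lt_one.trans hy)) hy.le
        norm_num at this
        linarith
    simpa [hf1] using this Set.self_mem_Ici hx1 hx1

theorem sq_sum_abs_sub_le_two_mul_sum_mul_log_div {α : Type*} [Fintype α] {P Q : α → ℝ}
    (hP : ∀ z, 0 ≤ P z) (hQ : ∀ z, 0 < Q z) (hP1 : ∑ z, P z = 1) (hQ1 : ∑ z, Q z = 1) :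
    (∑ z, |P z - Q z|) ^ 2 ≤ 2 * ∑ z, P z * log (P z / Q z) := by
  have hpoint : ∀ z, |P z - Q z| ^ 2 ≤ (2 * P z + 4 * Q z) / 3 * (Q z * klFun (P z / Q z)) := by
    intro z
    have hQz := hQ z
    have := three_mul_sq_sub_one_le_mul_klFun (div_nonneg (hP z) hQz.le)
    rw [sq_abs]
    calc (P z - Q z) ^ 2 = Q z ^ 2 / 3 * (3 * (P z / Q z - 1) ^ 2) := by field_simp
      _ ≤ Q z ^ 2 / 3 * ((2 * (P z / Q z) + 4) * klFun (P z / Q z)) := by gcongr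
      _ = _ := by field_simp
  have hklFun : ∀ z, Q z * klFun (P z / Q z) = P z * log (P z / Q z) + Q z - P z := by
    intro z
    rw [klFun_apply]
    field_simp [(hQ z).ne']
  calc (∑ z, |P z - Q z|) ^ 2
      ≤ (∑ z, (2 * P z + 4 * Q z) / 3) * ∑ z, Q z * klFun (P z / Q z) :=
        sum_sq_le_sum_mul_sum_of_sq_le_mul _ (fun z _ => by have := hP z; have := hQ z; positivity)
          (fun z _ => mul_nonneg (hQ z).le (klFun_nonneg (div_nonneg (hP z) (hQ z).le)))
          fun z _ => hpoint z
    _ = 2 * ∑ z, P z * log (P z / Q z) := by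
        simp only [hklFun, sum_add_distrib, sum_sub_distrib, ← sum_div, ← mul_sum, hP1, hQ1]
        ring

theorem sum_abs_sub_le_sqrt_two_mul_log_two_mul_sum_mul_logb {α : Type*} [Fintype α]
    {P Q : α → ℝ} (hP : ∀ z, 0 ≤ P z) (hQ : ∀ z, 0 < Q z) (hP1 : ∑ z, P z = 1)
    (hQ1 : ∑ z, Q z = 1) :
    ∑ z, |P z - Q z| ≤ √(2 * log 2 * ∑ z, P z * logb 2 (P z / Q z)) := by
  refine le_sqrt_of_sq_le ((sq_sum_abs_sub_le_two_mul_sum_mul_log_div hP hQ hP1 hQ1).trans_eq ?_)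
  simp only [logb, mul_sum, mul_div_assoc']
  field_simp [(log_pos one_lt_two).ne']


section PrefixKernel

variable {ι α : Type*} [Fintype α]

lemma sum_sum_update_eq_card_mul [Fintype ι] [DecidableEq ι] (m : ι) (H : (ι → α) → ℝ) :
    ∑ v, ∑ a, H (Function.update v m a) = Fintype.card α * ∑ v, H v := by
  let e : (ι → α) × α ≃ (ι → α) × α :=
    Function.Involutive.toPerm (fun p => (Function.update p.1 m p.2, p.1 m)) fun p => by simp
  calc ∑ v, ∑ a, H (Function.update v m a) = ∑ p, H (e p).1 :=
        (Fintype.sum_prod_type' fun v a => H (Function.update v m a)).symm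
    _ = ∑ p : (ι → α) × α, H p.1 := e.sum_comp (H ∘ Prod.fst)
    _ = Fintype.card α * ∑ v, H v := by
      rw [Fintype.sum_prod_type]; simp [mul_sum]

lemma card_mul_sum_mul_eq_sum_of_update_invariant [Fintype ι] [DecidableEq ι] (m : ι)
    {F : (ι → α) → ℝ} {g : α → (ι → α) → ℝ} (hF : ∀ v a, F (Function.update v m a) = F v)
    (hg : ∀ b v a, g b (Function.update v m a) = g b v) (hg1 : ∀ v, ∑ a, g a v = 1) :
    Fintype.card α * ∑ v, F v * g (v m) v = ∑ v, F v := by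
  rw [← sum_sum_update_eq_card_mul m]
  simp [hF, hg, ← mul_sum, hg1]

variable [Fintype ι] [LinearOrder ι] {k : ι → α → (ι → α) → ℝ}

lemma card_pow_mul_sum_prod_of_prefix_dependent
    (hk : ∀ j a v w, (∀ i < j, v i = w i) → k j a v = k j a w) (hk1 : ∀ j v, ∑ a, k j a v = 1)
    (T : Finset ι) :
    Fintype.card α ^ #T * ∑ v, ∏ j ∈ T, k j (v j) v = Fintype.card α ^ Fintype.card ι := by
  induction T using Finset.induction_on_max with
  | empty => simp
  | insert m T hT ih =>
    have hmT : m ∉ T := fun h => lt_irrefl m (hT m h)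
    rw [card_insert_of_notMem hmT, pow_succ, mul_assoc, ← ih]
    congr 1
    simp_rw [prod_insert hmT, mul_comm (k m _ _)]
    refine card_mul_sum_mul_eq_sum_of_update_invariant m (fun v a => prod_congr rfl fun j hj => ?_)
      (fun b v a => hk m b _ _ fun i hi => Function.update_of_ne hi.ne _ _) (hk1 m)
    rw [Function.update_of_ne (hT j hj).ne]
    exact hk j _ _ _ fun i hi => Function.update_of_ne (hi.trans (hT j hj)).ne _ _

lemma sum_prod_eq_one_of_prefix_dependent [Nonempty α]
    (hk : ∀ j a v w, (∀ i < j, v i = w i) → k j a v = k j a w) (hk1 : ∀ j v, ∑ a, k j a v = 1) :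
    ∑ v, ∏ j, k j (v j) v = 1 := by
  have := card_pow_mul_sum_prod_of_prefix_dependent hk hk1 univ
  rw [card_univ] at this
  exact (mul_eq_left₀ (by positivity)).1 this

end PrefixKernel


lemma prod_range_div_of_ne_zero {K : Type*} [Field K] {f : ℕ → K} (hf : ∀ k, f k ≠ 0) (n : ℕ) :
    ∏ k ∈ range n, f (k + 1) / f k = f n / f 0 := by
  induction n with
  | zero => simp [hf 0]
  | succ n ih => rw [prod_range_succ, ih]; field_simp [hf n]

section CondProb

variable {n : ℕ} {α : Type*} [Fintype α] [DecidableEq α] (f : (Fin n → α) → ℝ)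

noncomputable def condProb (j : Fin n) (a : α) (v : Fin n → α) : ℝ :=
  (∑ w ∈ univ.filter (fun w : Fin n → α => (∀ i, i < j → w i = v i) ∧ w j = a), f w) /
    ∑ w ∈ univ.filter (fun w : Fin n → α => ∀ i, i < j → w i = v i), f w

-- Indexed by a length `k : ℕ`, so that both the empty prefix and the whole word are covered.
def prefixMass (k : ℕ) (v : Fin n → α) : ℝ :=
  ∑ w ∈ univ.filter (fun w : Fin n → α => ∀ i : Fin n, (i : ℕ) < k → w i = v i), f w

variable {f}

lemma prefixMass_pos (hf : ∀ w, 0 < f w) (k : ℕ) (v : Fin n → α) : 0 < prefixMass f k v :=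
  sum_pos (fun w _ => hf w) ⟨v, by simp⟩

variable (f)

lemma prefixMass_zero (v : Fin n → α) : prefixMass f 0 v = ∑ w, f w := by
  simp [prefixMass]

lemma prefixMass_self (v : Fin n → α) : prefixMass f n v = f v := by
  simp [prefixMass, ← funext_iff, filter_eq']

lemma condProb_apply_self (j : Fin n) (v : Fin n → α) :
    condProb f j (v j) v = prefixMass f (j + 1) v / prefixMass f j v := by
  unfold condProb prefixMass
  congr 1
  refine sum_congr (filter_congr fun w _ => ?_) fun _ _ => rfl
  simp only [Nat.lt_succ_iff, le_iff_lt_or_eq, or_imp, forall_and, ← Fin.lt_def,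
    Fin.val_inj, forall_eq]

variable {f}

lemma eq_sum_mul_prod_condProb (hf : ∀ w, 0 < f w) (v : Fin n → α) :
    f v = (∑ w, f w) * ∏ j, condProb f j (v j) v := by
  simp_rw [condProb_apply_self]
  rw [Fin.prod_univ_eq_prod_range (fun k => prefixMass f (k + 1) v / prefixMass f k v),
    prod_range_div_of_ne_zero (fun k => (prefixMass_pos hf k v).ne'), prefixMass_self,
    prefixMass_zero, mul_div_cancel₀ _ (prefixMass_zero f v ▸ prefixMass_pos hf 0 v).ne']

lemma condProb_pos (hf : ∀ w, 0 < f w) (j : Fin n) (a : α) (v : Fin n → α) :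
    0 < condProb f j a v := by
  refine div_pos (sum_pos (fun w _ => hf w) ⟨Function.update v j a, ?_⟩)
    (sum_pos (fun w _ => hf w) ⟨v, by simp⟩)
  simp +contextual [Function.update_of_ne, ne_of_lt]

lemma sum_condProb_eq_one (hf : ∀ w, 0 < f w) (j : Fin n) (v : Fin n → α) :
    ∑ a, condProb f j a v = 1 := by
  unfold condProb
  rw [← sum_div, div_eq_one_iff_eq (sum_pos (fun w _ => hf w) ⟨v, by simp⟩).ne']
  simp_rw [← filter_filter]
  exact sum_fiberwise _ _ _

lemma condProb_congr {j : Fin n} {v w : Fin n → α} (h : ∀ i < j, v i = w i) (a : α) :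
    condProb f j a v = condProb f j a w := by
  unfold condProb
  congr 1 <;> refine sum_congr (filter_congr fun u _ => ?_) fun _ _ => rfl <;>
    simp +contextual [h]

end CondProb

lemma logb_prod_div_prod_ite_half {ι : Type*} [Fintype ι] [DecidableEq ι] {c : ι → ℝ}
    (hc : ∀ j, 0 < c j) (A : Finset ι) :
    logb 2 ((∏ j, c j) / ∏ j, if j ∈ A then (1 / 2 : ℝ) else c j) =
      ∑ j ∈ A, (1 + logb 2 (c j)) := by
  have hratio : ∀ j,
      c j / (if j ∈ A then (1 / 2 : ℝ) else c j) = if j ∈ A then 2 * c j else 1 := by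
    intro j
    split_ifs
    · ring
    · exact div_self (hc j).ne'
  rw [← prod_div_distrib, prod_congr rfl fun j _ => hratio j, prod_ite_mem, Finset.univ_inter,
    logb_prod _ _ fun j _ => (mul_pos two_pos (hc j)).ne']
  refine sum_congr rfl fun j _ => ?_
  rw [logb_mul two_ne_zero (hc j).ne', logb_self_eq_one one_lt_two]

lemma sum_mul_logb_div_eq_sum_one_add {Z ι : Type*} [Fintype Z] [Fintype ι] [DecidableEq ι]
    {P Q r : Z → ℝ} {c : ι → Z → ℝ} {A : Finset ι} (hr : ∀ z, 0 < r z) (hc : ∀ j z, 0 < c j z)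
    (hP : ∀ z, P z = r z * ∏ j, c j z)
    (hQ : ∀ z, Q z = r z * ∏ j, if j ∈ A then (1 / 2 : ℝ) else c j z) (hP1 : ∑ z, P z = 1) :
    ∑ z, P z * logb 2 (P z / Q z) = ∑ j ∈ A, (1 + ∑ z, P z * logb 2 (c j z)) := by
  have hlog : ∀ z, logb 2 (P z / Q z) = ∑ j ∈ A, (1 + logb 2 (c j z)) := by
    intro z
    rw [hP, hQ, mul_div_mul_left _ _ (hr z).ne', logb_prod_div_prod_ite_half fun j => hc j z]
  simp_rw [hlog, Finset.mul_sum, mul_add, mul_one]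
  rw [sum_comm]
  simp [sum_add_distrib, hP1]

lemma sum_prod_ite_half_condProb_eq_one {n : ℕ} {f : (Fin n → Bool) → ℝ} (hf : ∀ w, 0 < f w)
    (A : Finset (Fin n)) :
    ∑ v, ∏ j, (if j ∈ A then (1 / 2 : ℝ) else condProb f j (v j) v) = 1 :=
  sum_prod_eq_one_of_prefix_dependent (k := fun j b v => if j ∈ A then 1 / 2 else condProb f j b v)
    (fun j b v w h => by simp only [condProb_congr h])
    fun j v => by split_ifs; exacts [by norm_num, sum_condProb_eq_one hf j v]

theorem kl_bound_and_pinsker_uniformized_prefix_conditionals_general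
    {S : Type*} [Fintype S]
    (n : ℕ) (δ : ℝ) (hδ : 0 < δ)
    (P : (Fin n → Bool) × (Fin n → S) → ℝ)
    (hPpos : ∀ z, 0 < P z) (hP1 : ∑ z, P z = 1)
    (PS : (Fin n → S) → ℝ) (hPS : ∀ s, PS s = ∑ v, P (v, s))
    (A : Finset (Fin n))
    -- `condP j b v s` is `P(V^j = b | V^{1:j-1} = v^{1:j-1}, S^{1:n} = s)` under `P`.
    (condP : Fin n → Bool → (Fin n → Bool) → (Fin n → S) → ℝ)
    (hcondP : ∀ j b v s, condP j b v s =
      (∑ w ∈ Finset.univ.filter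
          (fun w : Fin n → Bool => (∀ i, i < j → w i = v i) ∧ w j = b), P (w, s)) /
      (∑ w ∈ Finset.univ.filter
          (fun w : Fin n → Bool => ∀ i, i < j → w i = v i), P (w, s)))
    (Q : (Fin n → Bool) × (Fin n → S) → ℝ)
    (hQ : ∀ v s, Q (v, s) =
      PS s * ∏ j, (if j ∈ A then (1 / 2 : ℝ) else condP j (v j) v s))
    -- `Hc j` is the conditional Shannon entropy `H(V^j | V^{1:j-1}, S^{1:n})` in bits.
    (Hc : Fin n → ℝ)
    (hHc : ∀ j, Hc j =
      -∑ z : (Fin n → Bool) × (Fin n → S), P z * Real.logb 2 (condP j (z.1 j) z.1 z.2))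
    (hhigh : ∀ j ∈ A, 1 - δ < Hc j) :
    (∑ z, P z * Real.logb 2 (P z / Q z) ≤ (A.card : ℝ) * δ) ∧
    ((A.card : ℝ) * δ ≤ (n : ℝ) * δ) ∧
    (∑ z, |P z - Q z| ≤ Real.sqrt (2 * Real.log 2) * Real.sqrt ((n : ℝ) * δ)) := by
  have hf : ∀ s, ∀ w, 0 < P (w, s) := fun s w => hPpos (w, s)
  have hcond : ∀ j b v s, condP j b v s = condProb (fun w => P (w, s)) j b v := hcondP
  have hc_pos : ∀ j (z : (Fin n → Bool) × (Fin n → S)), 0 < condP j (z.1 j) z.1 z.2 :=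
    fun j z => hcond .. ▸ condProb_pos (hf z.2) ..
  have hPS_pos : ∀ s, 0 < PS s := fun s => hPS s ▸ sum_pos (fun w _ => hf s w) univ_nonempty
  have hP_chain : ∀ z, P z = PS z.2 * ∏ j, condP j (z.1 j) z.1 z.2 := by
    rintro ⟨v, s⟩
    simp only [hPS, hcond]
    exact eq_sum_mul_prod_condProb (hf s) v
  have hQ_pos : ∀ z, 0 < Q z := fun z => hQ z.1 z.2 ▸ mul_pos (hPS_pos z.2)
    (prod_pos fun j _ => by split_ifs; exacts [one_half_pos, hc_pos j z])
  have hQ1 : ∑ z, Q z = 1 := by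
    rw [← hP1, Fintype.sum_prod_type_right, Fintype.sum_prod_type_right]
    refine sum_congr rfl fun s _ => ?_
    simp only [hQ, ← mul_sum, hcond, sum_prod_ite_half_condProb_eq_one (hf s), mul_one, hPS]
  have hD : ∑ z, P z * logb 2 (P z / Q z) ≤ A.card * δ := by
    rw [sum_mul_logb_div_eq_sum_one_add (fun z => hPS_pos z.2) hc_pos hP_chain
      (fun z => hQ z.1 z.2) hP1, ← nsmul_eq_mul, ← sum_const]
    exact sum_le_sum fun j hj => by linarith [hhigh j hj, hHc j]
  have hAn : (A.card : ℝ) * δ ≤ n * δ := by gcongr; simpa using A.card_le_univ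
  refine ⟨hD, hAn, ?_⟩
  calc ∑ z, |P z - Q z| ≤ √(2 * log 2 * ∑ z, P z * logb 2 (P z / Q z)) :=
        sum_abs_sub_le_sqrt_two_mul_log_two_mul_sum_mul_logb (fun z => (hPpos z).le) hQ_pos hP1 hQ1
    _ ≤ √(2 * log 2 * (n * δ)) := by gcongr; exact hD.trans hAn
    _ = √(2 * log 2) * √(n * δ) := sqrt_mul (by positivity) _

/-- In the setting of the polar-encoding distribution: `P` is a
full-support distribution on `{0,1}ⁿ × Sⁿ` with `S`-marginal `P_S`, and `Q` keeps `P_S` and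
the true successive conditionals `P(V^j | V^{1:j-1}, S^{1:n})` for `j ∉ A` while using the
uniform distribution on `{0,1}` for `j ∈ A`.  If `H(V^j | V^{1:j−1}, S^{1:n}) > 1 − δ` (in
bits) for every `j ∈ A`, then `D(P ‖ Q) ≤ |A|·δ ≤ n·δ`, and by Pinsker's inequality the
variational distance satisfies `𝕍(P, Q) ≤ √(2 log 2) · √(n δ)`. -/
theorem kl_bound_and_pinsker_uniformized_prefix_conditionals
    {S : Type*} [Fintype S] [DecidableEq S]
    (n : ℕ) (hn : 1 ≤ n) (δ : ℝ) (hδ : 0 < δ)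
    (P : (Fin n → Bool) × (Fin n → S) → ℝ)
    (hPpos : ∀ z, 0 < P z) (hP1 : ∑ z, P z = 1)
    (PS : (Fin n → S) → ℝ) (hPS : ∀ s, PS s = ∑ v, P (v, s))
    (A : Finset (Fin n))
    -- `condP j b v s` is `P(V^j = b | V^{1:j-1} = v^{1:j-1}, S^{1:n} = s)` under `P`.
    (condP : Fin n → Bool → (Fin n → Bool) → (Fin n → S) → ℝ)
    (hcondP : ∀ j b v s, condP j b v s =
      (∑ w ∈ Finset.univ.filter
          (fun w : Fin n → Bool => (∀ i, i < j → w i = v i) ∧ w j = b), P (w, s)) /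
      (∑ w ∈ Finset.univ.filter
          (fun w : Fin n → Bool => ∀ i, i < j → w i = v i), P (w, s)))
    (Q : (Fin n → Bool) × (Fin n → S) → ℝ)
    (hQ : ∀ v s, Q (v, s) =
      PS s * ∏ j, (if j ∈ A then (1 / 2 : ℝ) else condP j (v j) v s))
    -- `Hc j` is the conditional Shannon entropy `H(V^j | V^{1:j-1}, S^{1:n})` in bits.
    (Hc : Fin n → ℝ)
    (hHc : ∀ j, Hc j =
      -∑ z : (Fin n → Bool) × (Fin n → S), P z * Real.logb 2 (condP j (z.1 j) z.1 z.2))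
    (hhigh : ∀ j ∈ A, 1 - δ < Hc j) :
    (∑ z, P z * Real.logb 2 (P z / Q z) ≤ (A.card : ℝ) * δ) ∧
    ((A.card : ℝ) * δ ≤ (n : ℝ) * δ) ∧
    (∑ z, |P z - Q z| ≤ Real.sqrt (2 * Real.log 2) * Real.sqrt ((n : ℝ) * δ)) :=
  kl_bound_and_pinsker_uniformized_prefix_conditionals_general n δ hδ P hPpos hP1 PS hPS A condP
    hcondP Q hQ Hc hHc hhigh
end
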